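/- For every ω ∈ ℂ with ω ≠ 0, the function s(ω,x) := sin(ωx)/ω + ∫₀ˣ (K(x,t) − K(x,−t))·(sin(ωt)/ω) dt is twice continuously differentiable in x on [-b,b] and satisfies s'' − q·s + ω²·s = 0 on [-b,b], together with the initial conditions s(ω,0) = 0 and ∂s/∂x(ω,0) = 1. -/

import Mathlib

open Set MeasureTheory Filter

/-- Second partial derivative with respect to the first variable, within `[-b,b]`. -/
noncomputable def d2x (b : ℝ) (K : ℝ → ℝ → ℂ) (x t : ℝ) : ℂ :=
  derivWithin (fun x' => derivWithin (fun x'' => K x'' t) (Set.Icc (-b) b) x') (Set.Icc (-b) b) x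

/-- Second partial derivative with respect to the second variable, within `[-b,b]`. -/
noncomputable def d2t (b : ℝ) (K : ℝ → ℝ → ℂ) (x t : ℝ) : ℂ :=
  derivWithin (fun t' => derivWithin (fun t'' => K x t'') (Set.Icc (-b) b) t') (Set.Icc (-b) b) t

/-- `K` is a transmutation kernel for `(q, h)` on `[-b,b]`: it is twice continuously
differentiable, satisfies `∂²K/∂x² − q(x)K = ∂²K/∂t²` on `[-b,b]²`, and the Goursat data
`K(x,x) = h/2 + (1/2)∫₀ˣ q` and `K(x,−x) = h/2`. -/
def IsTransmutationKernel (b : ℝ) (q : ℝ → ℂ) (h : ℂ) (K : ℝ → ℝ → ℂ) : Prop :=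
  ContDiffOn ℝ 2 (fun p : ℝ × ℝ => K p.1 p.2) (Set.Icc (-b) b ×ˢ Set.Icc (-b) b) ∧
  (∀ x ∈ Set.Icc (-b) b, ∀ t ∈ Set.Icc (-b) b, d2x b K x t - q x * K x t = d2t b K x t) ∧
  (∀ x ∈ Set.Icc (-b) b, K x x = h / 2 + (1 / 2) * ∫ s in (0:ℝ)..x, q s) ∧
  (∀ x ∈ Set.Icc (-b) b, K x (-x) = h / 2)


/-!
Write `A(x,t) = K(x,t) - K(x,-t)` and `σ(t) = sin(ωt)/ω`, so `s(x) = σ(x) + ∫₀ˣ A(x,t) σ(t) dt`.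
`A` inherits the kernel equation `∂ₓ²A - qA = ∂ₜ²A`, vanishes at `t = 0`, and by the Goursat data
`A(x,x) = ½∫₀ˣ q`, so `∂ₓA(x,x) + ∂ₜA(x,x) = q(x)/2`. Differentiating twice under the integral
sign gives `s''` in terms of `∫₀ˣ ∂ₓ²A σ = ∫₀ˣ (∂ₜ²A + qA) σ`; integrating by parts twice against
`σ'' = -ω²σ` turns this into `(q - ω²) ∫₀ˣ A σ` plus terms evaluated at `t = x`, which together
with `σ''(x)` add up to `(q - ω²) σ(x)` by the diagonal identity.
-/

open Function Topology intervalIntegral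

section PartialDeriv

variable {E : Type*} [NormedAddCommGroup E] [NormedSpace ℝ E]
  {s u : Set ℝ} {K L : ℝ → ℝ → E} {x t : ℝ}

/- With `I = Icc (-b) b`, `d2x b K` is definitionally `partialDerivFst I (partialDerivFst I K)`,
and `d2t b K` is `partialDerivSnd I (partialDerivSnd I K)`. -/
noncomputable def partialDerivFst (s : Set ℝ) (K : ℝ → ℝ → E) (x t : ℝ) : E :=
  derivWithin (fun x' => K x' t) s x

noncomputable def partialDerivSnd (u : Set ℝ) (K : ℝ → ℝ → E) (x t : ℝ) : E :=
  derivWithin (fun t' => K x t') u t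

theorem hasDerivWithinAt_fderivWithin_fst
    (hK : DifferentiableWithinAt ℝ (uncurry K) (s ×ˢ u) (x, t)) (ht : t ∈ u) :
    HasDerivWithinAt (K · t) (fderivWithin ℝ (uncurry K) (s ×ˢ u) (x, t) (1, 0)) s x :=
  hK.hasFDerivWithinAt.comp_hasDerivWithinAt (f := fun y => (y, t)) x
    ((hasDerivWithinAt_id x s).prodMk (hasDerivWithinAt_const x s t)) fun _ hy => mk_mem_prod hy ht

theorem hasDerivWithinAt_fderivWithin_snd
    (hK : DifferentiableWithinAt ℝ (uncurry K) (s ×ˢ u) (x, t)) (hx : x ∈ s) :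
    HasDerivWithinAt (K x ·) (fderivWithin ℝ (uncurry K) (s ×ˢ u) (x, t) (0, 1)) u t :=
  hK.hasFDerivWithinAt.comp_hasDerivWithinAt t
    ((hasDerivWithinAt_const t u x).prodMk (hasDerivWithinAt_id t u)) fun _ hy => mk_mem_prod hx hy

theorem DifferentiableOn.hasDerivWithinAt_partialDerivFst
    (hK : DifferentiableOn ℝ (uncurry K) (s ×ˢ u)) (hx : x ∈ s) (ht : t ∈ u) :
    HasDerivWithinAt (K · t) (partialDerivFst s K x t) s x :=
  (hasDerivWithinAt_fderivWithin_fst (hK _ ⟨hx, ht⟩) ht).differentiableWithinAt.hasDerivWithinAt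

theorem DifferentiableOn.hasDerivWithinAt_partialDerivSnd
    (hK : DifferentiableOn ℝ (uncurry K) (s ×ˢ u)) (hx : x ∈ s) (ht : t ∈ u) :
    HasDerivWithinAt (K x ·) (partialDerivSnd u K x t) u t :=
  (hasDerivWithinAt_fderivWithin_snd (hK _ ⟨hx, ht⟩) hx).differentiableWithinAt.hasDerivWithinAt

theorem ContDiffOn.partialDerivFst {m n : WithTop ℕ∞}
    (hK : ContDiffOn ℝ n (uncurry K) (s ×ˢ u)) (hs : UniqueDiffOn ℝ s) (hu : UniqueDiffOn ℝ u)
    (hmn : m + 1 ≤ n) :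
    ContDiffOn ℝ m (uncurry (partialDerivFst s K)) (s ×ˢ u) := by
  have hdiff := hK.differentiableOn (ne_bot_of_le_ne_bot (by simp) hmn)
  refine ((hK.fderivWithin (hs.prod hu) hmn).clm_apply
    (contDiffOn_const (c := ((1 : ℝ), (0 : ℝ))))).congr ?_
  rintro ⟨x, t⟩ ⟨hx, ht⟩
  exact (hasDerivWithinAt_fderivWithin_fst (hdiff _ ⟨hx, ht⟩) ht).derivWithin (hs x hx)

theorem ContDiffOn.partialDerivSnd {m n : WithTop ℕ∞}
    (hK : ContDiffOn ℝ n (uncurry K) (s ×ˢ u)) (hs : UniqueDiffOn ℝ s) (hu : UniqueDiffOn ℝ u)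
    (hmn : m + 1 ≤ n) :
    ContDiffOn ℝ m (uncurry (partialDerivSnd u K)) (s ×ˢ u) := by
  have hdiff := hK.differentiableOn (ne_bot_of_le_ne_bot (by simp) hmn)
  refine ((hK.fderivWithin (hs.prod hu) hmn).clm_apply
    (contDiffOn_const (c := ((0 : ℝ), (1 : ℝ))))).congr ?_
  rintro ⟨x, t⟩ ⟨hx, ht⟩
  exact (hasDerivWithinAt_fderivWithin_snd (hdiff _ ⟨hx, ht⟩) hx).derivWithin (hu t ht)

theorem DifferentiableWithinAt.hasDerivWithinAt_diag
    (hK : DifferentiableWithinAt ℝ (uncurry K) (s ×ˢ s) (x, x)) (hs : UniqueDiffWithinAt ℝ s x)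
    (hx : x ∈ s) :
    HasDerivWithinAt (fun y => K y y) (partialDerivFst s K x x + partialDerivSnd s K x x) s x := by
  have hcurve := hK.hasFDerivWithinAt.comp_hasDerivWithinAt (f := fun y => (y, y)) x
    ((hasDerivWithinAt_id x s).prodMk (hasDerivWithinAt_id x s)) fun _ hy => mk_mem_prod hy hy
  rwa [show ((1 : ℝ), (1 : ℝ)) = (1, 0) + (0, 1) by simp, map_add,
    ← (hasDerivWithinAt_fderivWithin_fst hK hx).derivWithin hs,
    ← (hasDerivWithinAt_fderivWithin_snd hK hx).derivWithin hs] at hcurve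

theorem partialDerivFst_sub (hK : DifferentiableOn ℝ (uncurry K) (s ×ˢ u))
    (hL : DifferentiableOn ℝ (uncurry L) (s ×ˢ u)) (hx : x ∈ s) (ht : t ∈ u) :
    partialDerivFst s (fun x t => K x t - L x t) x t =
      partialDerivFst s K x t - partialDerivFst s L x t :=
  derivWithin_fun_sub (hK.hasDerivWithinAt_partialDerivFst hx ht).differentiableWithinAt
    (hL.hasDerivWithinAt_partialDerivFst hx ht).differentiableWithinAt

theorem partialDerivSnd_sub (hK : DifferentiableOn ℝ (uncurry K) (s ×ˢ u))
    (hL : DifferentiableOn ℝ (uncurry L) (s ×ˢ u)) (hx : x ∈ s) (ht : t ∈ u) :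
    partialDerivSnd u (fun x t => K x t - L x t) x t =
      partialDerivSnd u K x t - partialDerivSnd u L x t :=
  derivWithin_fun_sub (hK.hasDerivWithinAt_partialDerivSnd hx ht).differentiableWithinAt
    (hL.hasDerivWithinAt_partialDerivSnd hx ht).differentiableWithinAt

theorem partialDerivSnd_comp_neg (hu : -u = u) (K : ℝ → ℝ → E) (x t : ℝ) :
    partialDerivSnd u (fun x t => K x (-t)) x t = -partialDerivSnd u K x (-t) := by
  simp only [partialDerivSnd]
  rw [derivWithin_comp_neg, hu]

end PartialDeriv

section Leibniz

variable {E : Type*} [NormedAddCommGroup E] [NormedSpace ℝ E]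

theorem eventually_norm_sub_sub_smul_le {s u : Set ℝ} {g g' : ℝ → ℝ → E} (hs : Convex ℝ s)
    (hsu : IsCompact (s ×ˢ u)) (hg' : ContinuousOn (uncurry g') (s ×ˢ u))
    (hder : ∀ x ∈ s, ∀ t ∈ u, HasDerivWithinAt (g · t) (g' x t) s x) {x : ℝ} (hx : x ∈ s)
    {ε : ℝ} (hε : 0 < ε) :
    ∀ᶠ y in 𝓝[s] x, ∀ t ∈ u, ‖g y t - g x t - (y - x) • g' x t‖ ≤ ε * ‖y - x‖ := by
  obtain ⟨δ, hδ, hclose⟩ :=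
    Metric.uniformContinuousOn_iff.1 (hsu.uniformContinuousOn_of_continuous hg') ε hε
  filter_upwards [inter_mem_nhdsWithin s (Metric.ball_mem_nhds x hδ)] with y hy t ht
  set B := s ∩ Metric.ball x δ
  have hB : Convex ℝ B := hs.inter (convex_ball x δ)
  have hxB : x ∈ B := ⟨hx, Metric.mem_ball_self hδ⟩
  have hremainder : ∀ ξ ∈ B, HasDerivWithinAt (fun ξ => g ξ t - (ξ - x) • g' x t)
      (g' ξ t - g' x t) B ξ := fun ξ hξ => by
    simpa using ((hder ξ hξ.1 t ht).mono inter_subset_left).fun_sub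
      (((hasDerivWithinAt_id ξ B).sub_const x).smul_const (g' x t))
  have hbound : ∀ ξ ∈ B, ‖g' ξ t - g' x t‖ ≤ ε := fun ξ hξ => by
    rw [← dist_eq_norm]
    refine (hclose (ξ, t) ⟨hξ.1, ht⟩ (x, t) ⟨hx, ht⟩ ?_).le
    simpa [Prod.dist_eq, hδ.le] using hξ.2
  have key := hB.norm_image_sub_le_of_norm_hasDerivWithin_le hremainder hbound hxB hy
  simp only [sub_self, zero_smul, sub_zero] at key
  rwa [sub_right_comm] at key

variable {a b c x : ℝ}

theorem hasDerivWithinAt_integral_sub_sub_smul {g g' : ℝ → ℝ → E}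
    (hg' : ContinuousOn (uncurry g') (Icc a b ×ˢ Icc a b))
    (hder : ∀ x ∈ Icc a b, ∀ t ∈ Icc a b, HasDerivWithinAt (g · t) (g' x t) (Icc a b) x)
    (hc : c ∈ Icc a b) (hx : x ∈ Icc a b) :
    HasDerivWithinAt (fun y => ∫ t in c..y, (g y t - g x t - (y - x) • g' x t)) 0 (Icc a b) x := by
  rw [hasDerivWithinAt_iff_isLittleO, Asymptotics.isLittleO_iff]
  intro ε hε
  have hC : 0 < b - a + 1 := by linarith [hx.1, hx.2]
  filter_upwards [eventually_norm_sub_sub_smul_le (convex_Icc a b)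
    (isCompact_Icc.prod isCompact_Icc) hg' hder hx (div_pos hε hC), self_mem_nhdsWithin]
    with y hy hyI
  calc ‖(∫ t in c..y, (g y t - g x t - (y - x) • g' x t))
        - (∫ t in c..x, (g x t - g x t - (x - x) • g' x t)) - (y - x) • (0 : E)‖
      = ‖∫ t in c..y, (g y t - g x t - (y - x) • g' x t)‖ := by simp
    _ ≤ ε / (b - a + 1) * ‖y - x‖ * |y - c| :=
      intervalIntegral.norm_integral_le_of_norm_le_const fun t ht =>
        hy t (uIcc_subset_Icc hc hyI (uIoc_subset_uIcc ht))
    _ ≤ ε / (b - a + 1) * ‖y - x‖ * (b - a + 1) := by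
      gcongr
      rw [abs_le]
      constructor <;> linarith [hc.1, hc.2, hyI.1, hyI.2]
    _ = ε * ‖y - x‖ := by field_simp

variable [CompleteSpace E]

theorem hasDerivWithinAt_integral_Icc {f : ℝ → E} (hf : ContinuousOn f (Icc a b))
    (hc : c ∈ Icc a b) (hx : x ∈ Icc a b) :
    HasDerivWithinAt (fun y => ∫ t in c..y, f t) (f x) (Icc a b) x := by
  have : Fact (x ∈ Icc a b) := ⟨hx⟩
  exact integral_hasDerivWithinAt_right ((hf.mono (uIcc_subset_Icc hc hx)).intervalIntegrable)
    (hf.stronglyMeasurableAtFilter_nhdsWithin measurableSet_Icc x) (hf x hx)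

theorem hasDerivWithinAt_integral_param {g g' : ℝ → ℝ → E}
    (hg : ContinuousOn (uncurry g) (Icc a b ×ˢ Icc a b))
    (hg' : ContinuousOn (uncurry g') (Icc a b ×ˢ Icc a b))
    (hder : ∀ x ∈ Icc a b, ∀ t ∈ Icc a b, HasDerivWithinAt (g · t) (g' x t) (Icc a b) x)
    (hc : c ∈ Icc a b) (hx : x ∈ Icc a b) :
    HasDerivWithinAt (fun y => ∫ t in c..y, g y t) (g x x + ∫ t in c..x, g' x t) (Icc a b) x := by
  set I := Icc a b
  have hint : ∀ {y} (F : ℝ → ℝ → E), ContinuousOn (uncurry F) (I ×ˢ I) → y ∈ I → ∀ z ∈ I,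
      IntervalIntegrable (F z) volume c y := fun F hF hy z hz =>
    ((hF.uncurry_left z hz).mono (uIcc_subset_Icc hc hy)).intervalIntegrable
  have hsplit : ∀ y ∈ I, ∫ t in c..y, g y t = (∫ t in c..y, g x t)
      + (y - x) • (∫ t in c..y, g' x t) + ∫ t in c..y, (g y t - g x t - (y - x) • g' x t) :=
    fun y hy => by
      rw [intervalIntegral.integral_sub (g := fun t => (y - x) • g' x t)
          ((hint g hg hy y hy).sub (hint g hg hy x hx)) ((hint g' hg' hy x hx).smul (y - x)),
        intervalIntegral.integral_sub (hint g hg hy y hy) (hint g hg hy x hx),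
        intervalIntegral.integral_smul]
      abel
  have hsum := ((hasDerivWithinAt_integral_Icc (hg.uncurry_left x hx) hc hx).add
    (((hasDerivWithinAt_id x I).sub_const x).smul
      (hasDerivWithinAt_integral_Icc (hg'.uncurry_left x hx) hc hx))).add
    (hasDerivWithinAt_integral_sub_sub_smul hg' hder hc hx)
  simp only [id, sub_self, one_smul, zero_smul, zero_add, add_zero] at hsum
  exact hsum.congr hsplit (hsplit x hx)

end Leibniz

section SecondDeriv

variable {𝕜 F : Type*} [NontriviallyNormedField 𝕜] [NormedAddCommGroup F] [NormedSpace 𝕜 F]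
  {f f' f'' : 𝕜 → F} {s : Set 𝕜}

theorem contDiffOn_two_of_hasDerivWithinAt (hs : UniqueDiffOn 𝕜 s)
    (hf : ∀ x ∈ s, HasDerivWithinAt f (f' x) s x) (hf' : ∀ x ∈ s, HasDerivWithinAt f' (f'' x) s x)
    (hf'' : ContinuousOn f'' s) : ContDiffOn 𝕜 2 f s := by
  rw [show (2 : WithTop ℕ∞) = 1 + 1 by norm_num, contDiffOn_succ_iff_derivWithin hs]
  refine ⟨fun x hx => (hf x hx).differentiableWithinAt, by simp, ?_⟩
  refine ContDiffOn.congr ?_ fun x hx => (hf x hx).derivWithin (hs x hx)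
  rw [show (1 : WithTop ℕ∞) = 0 + 1 by norm_num, contDiffOn_succ_iff_derivWithin hs,
    contDiffOn_zero]
  exact ⟨fun x hx => (hf' x hx).differentiableWithinAt, by simp,
    hf''.congr fun x hx => (hf' x hx).derivWithin (hs x hx)⟩

theorem derivWithin_derivWithin_of_hasDerivWithinAt (hs : UniqueDiffOn 𝕜 s)
    (hf : ∀ x ∈ s, HasDerivWithinAt f (f' x) s x) (hf' : ∀ x ∈ s, HasDerivWithinAt f' (f'' x) s x)
    {x : 𝕜} (hx : x ∈ s) : derivWithin (derivWithin f s) s x = f'' x := by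
  rw [derivWithin_congr (fun y hy => (hf y hy).derivWithin (hs y hy))
    ((hf x hx).derivWithin (hs x hx))]
  exact (hf' x hx).derivWithin (hs x hx)

end SecondDeriv

section SineKernel

variable {ω : ℂ}

theorem hasDerivAt_sin_mul_div (hω : ω ≠ 0) (t : ℝ) :
    HasDerivAt (fun y : ℝ => Complex.sin (ω * y) / ω) (Complex.cos (ω * t)) t := by
  have h := (((hasDerivAt_id (t : ℂ)).const_mul ω).csin.comp_ofReal).div_const ω
  simpa [mul_div_cancel_right₀ _ hω] using h

theorem hasDerivAt_cos_mul (ω : ℂ) (t : ℝ) :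
    HasDerivAt (fun y : ℝ => Complex.cos (ω * y)) (-(ω * Complex.sin (ω * t))) t := by
  simpa [mul_comm] using ((hasDerivAt_id (t : ℂ)).const_mul ω).ccos.comp_ofReal

theorem integral_deriv2_mul_sin_div {x : ℝ} {f f' f'' : ℝ → ℂ} (hω : ω ≠ 0)
    (hf : ∀ t ∈ uIcc 0 x, HasDerivWithinAt f (f' t) (uIcc 0 x) t)
    (hf' : ∀ t ∈ uIcc 0 x, HasDerivWithinAt f' (f'' t) (uIcc 0 x) t)
    (hf'' : IntervalIntegrable f'' volume 0 x) (hf0 : f 0 = 0) :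
    ∫ t in (0:ℝ)..x, f'' t * (Complex.sin (ω * t) / ω) =
      f' x * (Complex.sin (ω * x) / ω) - f x * Complex.cos (ω * x)
        - ω ^ 2 * ∫ t in (0:ℝ)..x, f t * (Complex.sin (ω * t) / ω) := by
  have hsin : Continuous fun t : ℝ => Complex.sin (ω * t) / ω := by fun_prop
  have hcos : Continuous fun t : ℝ => Complex.cos (ω * t) := by fun_prop
  have hfσ : IntervalIntegrable (fun t => f t * (Complex.sin (ω * t) / ω)) volume 0 x :=
    ((HasDerivWithinAt.continuousOn hf).mul hsin.continuousOn).intervalIntegrable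
  have hwronskian : ∫ t in (0:ℝ)..x,
      f'' t * (Complex.sin (ω * t) / ω) + ω ^ 2 * (f t * (Complex.sin (ω * t) / ω)) =
      (f' x * (Complex.sin (ω * x) / ω) - f x * Complex.cos (ω * x))
        - (f' 0 * (Complex.sin (ω * (0 : ℝ)) / ω) - f 0 * Complex.cos (ω * (0 : ℝ))) := by
    refine integral_eq_sub_of_hasDeriv_right
      ((HasDerivWithinAt.continuousOn hf').mul hsin.continuousOn |>.sub
        ((HasDerivWithinAt.continuousOn hf).mul hcos.continuousOn)) (fun t ht => ?_)
      ((hf''.mul_continuousOn hsin.continuousOn).add (hfσ.const_mul _))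
    have hnhds : uIcc 0 x ∈ 𝓝 t := Icc_mem_nhds ht.1 ht.2
    have hderiv := (((hf' t (mem_Icc_of_Ioo ht)).hasDerivAt hnhds).mul
      (hasDerivAt_sin_mul_div hω t)).sub
        (((hf t (mem_Icc_of_Ioo ht)).hasDerivAt hnhds).mul (hasDerivAt_cos_mul ω t))
    exact (hderiv.congr_deriv (by field_simp; ring)).hasDerivWithinAt
  rw [intervalIntegral.integral_add (hf''.mul_continuousOn hsin.continuousOn) (hfσ.const_mul _),
    intervalIntegral.integral_const_mul] at hwronskian
  simp only [Complex.ofReal_zero, mul_zero, Complex.sin_zero, zero_div, hf0] at hwronskian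
  linear_combination hwronskian

end SineKernel

section SineTypeSolution

variable {a b x : ℝ} {A : ℝ → ℝ → ℂ} {q : ℝ → ℂ} {ω : ℂ}

noncomputable def sineSolution (A : ℝ → ℝ → ℂ) (ω : ℂ) (x : ℝ) : ℂ :=
  Complex.sin (ω * x) / ω + ∫ t in (0:ℝ)..x, A x t * (Complex.sin (ω * t) / ω)

noncomputable def sineSolutionDeriv (s : Set ℝ) (A : ℝ → ℝ → ℂ) (ω : ℂ) (x : ℝ) : ℂ :=
  Complex.cos (ω * x) + (A x x * (Complex.sin (ω * x) / ω)
    + ∫ t in (0:ℝ)..x, partialDerivFst s A x t * (Complex.sin (ω * t) / ω))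

theorem ContinuousOn.mul_sin_div {s : Set (ℝ × ℝ)} {F : ℝ → ℝ → ℂ}
    (hF : ContinuousOn (uncurry F) s) (ω : ℂ) :
    ContinuousOn (uncurry fun x t => F x t * (Complex.sin (ω * t) / ω)) s :=
  hF.mul (Continuous.continuousOn (by fun_prop))

theorem hasDerivWithinAt_sineSolution (hab : a < b) (h0 : 0 ∈ Icc a b) (hx : x ∈ Icc a b)
    (hA : ContDiffOn ℝ 1 (uncurry A) (Icc a b ×ˢ Icc a b)) (hω : ω ≠ 0) :
    HasDerivWithinAt (sineSolution A ω) (sineSolutionDeriv (Icc a b) A ω x) (Icc a b) x := by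
  have hI := uniqueDiffOn_Icc hab
  have hAx := (hA.partialDerivFst hI hI (m := 0) le_rfl).continuousOn
  refine (hasDerivAt_sin_mul_div hω x).hasDerivWithinAt.add
    (hasDerivWithinAt_integral_param (hA.continuousOn.mul_sin_div ω) (hAx.mul_sin_div ω)
      (fun y hy t ht => ?_) h0 hx)
  exact ((hA.differentiableOn one_ne_zero).hasDerivWithinAt_partialDerivFst hy ht).mul_const _

theorem partialDerivFst_add_partialDerivSnd_diag (hab : a < b) (h0 : 0 ∈ Icc a b)
    (hx : x ∈ Icc a b) (hA : DifferentiableOn ℝ (uncurry A) (Icc a b ×ˢ Icc a b))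
    (hq : ContinuousOn q (Icc a b))
    (hdiag : ∀ y ∈ Icc a b, A y y = 1 / 2 * ∫ s in (0:ℝ)..y, q s) :
    partialDerivFst (Icc a b) A x x + partialDerivSnd (Icc a b) A x x = 1 / 2 * q x :=
  (uniqueDiffOn_Icc hab x hx).eq_deriv _
    ((hA _ ⟨hx, hx⟩).hasDerivWithinAt_diag (uniqueDiffOn_Icc hab x hx) hx)
    (((hasDerivWithinAt_integral_Icc hq h0 hx).const_mul _).congr hdiag (hdiag x hx))

theorem integral_partialDerivFst_partialDerivFst_mul_sin_div (hab : a < b) (h0 : 0 ∈ Icc a b)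
    (hx : x ∈ Icc a b) (hA : ContDiffOn ℝ 2 (uncurry A) (Icc a b ×ˢ Icc a b))
    (hpde : ∀ x ∈ Icc a b, ∀ t ∈ Icc a b,
      partialDerivFst (Icc a b) (partialDerivFst (Icc a b) A) x t - q x * A x t =
        partialDerivSnd (Icc a b) (partialDerivSnd (Icc a b) A) x t)
    (hA0 : A x 0 = 0) (hω : ω ≠ 0) :
    ∫ t in (0:ℝ)..x,
        partialDerivFst (Icc a b) (partialDerivFst (Icc a b) A) x t * (Complex.sin (ω * t) / ω) =
      partialDerivSnd (Icc a b) A x x * (Complex.sin (ω * x) / ω) - A x x * Complex.cos (ω * x)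
        - ω ^ 2 * (∫ t in (0:ℝ)..x, A x t * (Complex.sin (ω * t) / ω))
        + q x * ∫ t in (0:ℝ)..x, A x t * (Complex.sin (ω * t) / ω) := by
  set I := Icc a b
  set σ : ℝ → ℂ := fun t => Complex.sin (ω * t) / ω
  have hI := uniqueDiffOn_Icc hab
  have hsub : uIcc 0 x ⊆ I := uIcc_subset_Icc h0 hx
  have hA2 := hA.partialDerivSnd hI hI (m := 1) (by norm_num)
  have hA22 := (hA2.partialDerivSnd hI hI (m := 0) le_rfl).continuousOn
  have hAσ : IntervalIntegrable (fun t => A x t * σ t) volume 0 x :=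
    ((hA.continuousOn.mul_sin_div ω).uncurry_left x hx |>.mono hsub).intervalIntegrable
  have hA22σ : IntervalIntegrable
      (fun t => partialDerivSnd I (partialDerivSnd I A) x t * σ t) volume 0 x :=
    ((hA22.mul_sin_div ω).uncurry_left x hx |>.mono hsub).intervalIntegrable
  calc ∫ t in (0:ℝ)..x, partialDerivFst I (partialDerivFst I A) x t * σ t
      = ∫ t in (0:ℝ)..x,
          partialDerivSnd I (partialDerivSnd I A) x t * σ t + q x * (A x t * σ t) :=
        intervalIntegral.integral_congr fun t ht => by
          simp only [← hpde x hx t (hsub ht)]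
          ring
    _ = (∫ t in (0:ℝ)..x, partialDerivSnd I (partialDerivSnd I A) x t * σ t)
          + q x * ∫ t in (0:ℝ)..x, A x t * σ t := by
        rw [intervalIntegral.integral_add hA22σ (hAσ.const_mul _),
          intervalIntegral.integral_const_mul]
    _ = _ := by
        rw [integral_deriv2_mul_sin_div hω
          (fun t ht => ((hA.differentiableOn two_ne_zero).hasDerivWithinAt_partialDerivSnd hx
            (hsub ht)).mono hsub)
          (fun t ht => ((hA2.differentiableOn one_ne_zero).hasDerivWithinAt_partialDerivSnd hx
            (hsub ht)).mono hsub)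
          ((hA22.uncurry_left x hx |>.mono hsub).intervalIntegrable) hA0]

theorem hasDerivWithinAt_sineSolutionDeriv (hab : a < b) (h0 : 0 ∈ Icc a b) (hx : x ∈ Icc a b)
    (hA : ContDiffOn ℝ 2 (uncurry A) (Icc a b ×ˢ Icc a b)) (hq : ContinuousOn q (Icc a b))
    (hpde : ∀ x ∈ Icc a b, ∀ t ∈ Icc a b,
      partialDerivFst (Icc a b) (partialDerivFst (Icc a b) A) x t - q x * A x t =
        partialDerivSnd (Icc a b) (partialDerivSnd (Icc a b) A) x t)
    (hA0 : ∀ x ∈ Icc a b, A x 0 = 0)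
    (hdiag : ∀ x ∈ Icc a b, A x x = 1 / 2 * ∫ s in (0:ℝ)..x, q s) (hω : ω ≠ 0) :
    HasDerivWithinAt (sineSolutionDeriv (Icc a b) A ω)
      (q x * sineSolution A ω x - ω ^ 2 * sineSolution A ω x) (Icc a b) x := by
  set I := Icc a b
  set σ : ℝ → ℂ := fun t => Complex.sin (ω * t) / ω
  have hI := uniqueDiffOn_Icc hab
  have hA1 := hA.partialDerivFst hI hI (m := 1) (by norm_num)
  have hA11 := (hA1.partialDerivFst hI hI (m := 0) le_rfl).continuousOn
  have hdiagterm : HasDerivWithinAt (fun y => A y y * σ y)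
      (1 / 2 * q x * σ x + A x x * Complex.cos (ω * x)) I x :=
    (((hasDerivWithinAt_integral_Icc hq h0 hx).const_mul _).congr hdiag (hdiag x hx)).mul
      (hasDerivAt_sin_mul_div hω x).hasDerivWithinAt
  have hintterm : HasDerivWithinAt (fun y => ∫ t in (0:ℝ)..y, partialDerivFst I A y t * σ t)
      (partialDerivFst I A x x * σ x
        + ∫ t in (0:ℝ)..x, partialDerivFst I (partialDerivFst I A) x t * σ t) I x :=
    hasDerivWithinAt_integral_param (hA1.continuousOn.mul_sin_div ω) (hA11.mul_sin_div ω)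
      (fun y hy t ht =>
        ((hA1.differentiableOn one_ne_zero).hasDerivWithinAt_partialDerivFst hy ht).mul_const _)
      h0 hx
  have hD := partialDerivFst_add_partialDerivSnd_diag hab h0 hx (hA.differentiableOn two_ne_zero)
    hq hdiag
  have hσ : ω * Complex.sin (ω * x) = ω ^ 2 * σ x := by
    simp only [σ]
    field_simp
  refine ((hasDerivAt_cos_mul ω x).hasDerivWithinAt.add (hdiagterm.add hintterm)).congr_deriv ?_
  show _ = q x * (σ x + ∫ t in (0:ℝ)..x, A x t * σ t) - ω ^ 2 * (σ x + ∫ t in (0:ℝ)..x, A x t * σ t)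
  rw [integral_partialDerivFst_partialDerivFst_mul_sin_div hab h0 hx hA hpde (hA0 x hx) hω]
  linear_combination σ x * hD - hσ

end SineTypeSolution

section OddPart

variable {E : Type*} [NormedAddCommGroup E] [NormedSpace ℝ E]
  {s u : Set ℝ} {K L : ℝ → ℝ → E} {x t : ℝ}

theorem partialDerivSnd_partialDerivSnd_comp_neg (hu : -u = u) (K : ℝ → ℝ → E) (x t : ℝ) :
    partialDerivSnd u (partialDerivSnd u fun x t => K x (-t)) x t =
      partialDerivSnd u (partialDerivSnd u K) x (-t) := by
  have h : partialDerivSnd u (fun x t => K x (-t)) = fun x t => -partialDerivSnd u K x (-t) := by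
    funext x t
    exact partialDerivSnd_comp_neg hu K x t
  rw [h, partialDerivSnd_comp_neg hu (fun x t => -partialDerivSnd u K x t)]
  simp only [partialDerivSnd, derivWithin.fun_neg, neg_neg]

theorem ContDiffOn.comp_neg_snd {n : WithTop ℕ∞} (hu : -u = u)
    (hK : ContDiffOn ℝ n (uncurry K) (s ×ˢ u)) :
    ContDiffOn ℝ n (uncurry fun x t => K x (-t)) (s ×ˢ u) :=
  hK.comp (contDiff_fst.prodMk contDiff_snd.neg).contDiffOn fun _ hp =>
    mk_mem_prod hp.1 (hu ▸ neg_mem_neg.2 hp.2)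

theorem partialDerivFst_partialDerivFst_sub (hs : UniqueDiffOn ℝ s) (hu : UniqueDiffOn ℝ u)
    (hK : ContDiffOn ℝ 2 (uncurry K) (s ×ˢ u)) (hL : ContDiffOn ℝ 2 (uncurry L) (s ×ˢ u))
    (hx : x ∈ s) (ht : t ∈ u) :
    partialDerivFst s (partialDerivFst s fun x t => K x t - L x t) x t =
      partialDerivFst s (partialDerivFst s K) x t
        - partialDerivFst s (partialDerivFst s L) x t := by
  have hK1 := hK.partialDerivFst hs hu (m := 1) (by norm_num)
  have hL1 := hL.partialDerivFst hs hu (m := 1) (by norm_num)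
  have hsub : ∀ y ∈ s, partialDerivFst s (fun x t => K x t - L x t) y t =
      partialDerivFst s K y t - partialDerivFst s L y t := fun y hy =>
    partialDerivFst_sub (hK.differentiableOn two_ne_zero) (hL.differentiableOn two_ne_zero) hy ht
  rw [partialDerivFst, derivWithin_congr hsub (hsub x hx)]
  exact partialDerivFst_sub (hK1.differentiableOn one_ne_zero) (hL1.differentiableOn one_ne_zero)
    hx ht

theorem partialDerivSnd_partialDerivSnd_sub (hs : UniqueDiffOn ℝ s) (hu : UniqueDiffOn ℝ u)
    (hK : ContDiffOn ℝ 2 (uncurry K) (s ×ˢ u)) (hL : ContDiffOn ℝ 2 (uncurry L) (s ×ˢ u))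
    (hx : x ∈ s) (ht : t ∈ u) :
    partialDerivSnd u (partialDerivSnd u fun x t => K x t - L x t) x t =
      partialDerivSnd u (partialDerivSnd u K) x t
        - partialDerivSnd u (partialDerivSnd u L) x t := by
  have hK1 := hK.partialDerivSnd hs hu (m := 1) (by norm_num)
  have hL1 := hL.partialDerivSnd hs hu (m := 1) (by norm_num)
  have hsub : ∀ τ ∈ u, partialDerivSnd u (fun x t => K x t - L x t) x τ =
      partialDerivSnd u K x τ - partialDerivSnd u L x τ := fun τ hτ =>
    partialDerivSnd_sub (hK.differentiableOn two_ne_zero) (hL.differentiableOn two_ne_zero) hx hτ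
  rw [partialDerivSnd, derivWithin_congr hsub (hsub t ht)]
  exact partialDerivSnd_sub (hK1.differentiableOn one_ne_zero) (hL1.differentiableOn one_ne_zero)
    hx ht

end OddPart

theorem pde_sub_comp_neg_snd {s u : Set ℝ} {K : ℝ → ℝ → ℂ} {q : ℝ → ℂ} (hneg : -u = u)
    (hs : UniqueDiffOn ℝ s) (hu : UniqueDiffOn ℝ u) (hK : ContDiffOn ℝ 2 (uncurry K) (s ×ˢ u))
    (hpde : ∀ x ∈ s, ∀ t ∈ u,
      partialDerivFst s (partialDerivFst s K) x t - q x * K x t =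
        partialDerivSnd u (partialDerivSnd u K) x t)
    {x t : ℝ} (hx : x ∈ s) (ht : t ∈ u) :
    partialDerivFst s (partialDerivFst s fun x t => K x t - K x (-t)) x t
        - q x * (K x t - K x (-t)) =
      partialDerivSnd u (partialDerivSnd u fun x t => K x t - K x (-t)) x t := by
  have hKneg := hK.comp_neg_snd hneg
  have hreflect : partialDerivFst s (partialDerivFst s fun x t => K x (-t)) x t =
      partialDerivFst s (partialDerivFst s K) x (-t) := rfl
  rw [partialDerivFst_partialDerivFst_sub hs hu hK hKneg hx ht,
    partialDerivSnd_partialDerivSnd_sub hs hu hK hKneg hx ht, hreflect,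
    partialDerivSnd_partialDerivSnd_comp_neg hneg]
  linear_combination hpde x hx t ht - hpde x hx (-t) (hneg ▸ neg_mem_neg.2 ht)

/-- `s(ω,x) = sin(ωx)/ω + ∫₀ˣ (K(x,t)−K(x,−t)) (sin(ωt)/ω) dt` is a `C²`
solution of `s'' − q s + ω² s = 0` with `s(ω,0) = 0`, `∂s/∂x(ω,0) = 1`. -/
theorem sine_type_solution
    (b : ℝ) (hb : 0 < b) (q : ℝ → ℂ) (hq : ContDiffOn ℝ 1 q (Set.Icc (-b) b))
    (h : ℂ) (K : ℝ → ℝ → ℂ) (hK : IsTransmutationKernel b q h K)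
    (ω : ℂ) (hω : ω ≠ 0) :
    ContDiffOn ℝ 2
      (fun x : ℝ => Complex.sin (ω * x) / ω
        + ∫ t in (0:ℝ)..x, (K x t - K x (-t)) * (Complex.sin (ω * t) / ω))
      (Set.Icc (-b) b) ∧
    (∀ x ∈ Set.Icc (-b) b,
      derivWithin
          (derivWithin
            (fun y : ℝ => Complex.sin (ω * y) / ω
              + ∫ t in (0:ℝ)..y, (K y t - K y (-t)) * (Complex.sin (ω * t) / ω))
            (Set.Icc (-b) b))
          (Set.Icc (-b) b) x
        - q x * (Complex.sin (ω * x) / ω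
            + ∫ t in (0:ℝ)..x, (K x t - K x (-t)) * (Complex.sin (ω * t) / ω))
        + ω ^ 2 * (Complex.sin (ω * x) / ω
            + ∫ t in (0:ℝ)..x, (K x t - K x (-t)) * (Complex.sin (ω * t) / ω))
        = 0) ∧
    (Complex.sin (ω * (0:ℝ)) / ω
      + ∫ t in (0:ℝ)..(0:ℝ), (K 0 t - K 0 (-t)) * (Complex.sin (ω * t) / ω)) = 0 ∧
    derivWithin
        (fun y : ℝ => Complex.sin (ω * y) / ω
          + ∫ t in (0:ℝ)..y, (K y t - K y (-t)) * (Complex.sin (ω * t) / ω))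
        (Set.Icc (-b) b) 0 = 1 := by
  obtain ⟨hK2, hpde, hdiag, hantidiag⟩ := hK
  set I := Icc (-b) b
  have hbb : -b < b := by linarith
  have h0 : (0 : ℝ) ∈ I := ⟨by linarith, hb.le⟩
  have hI : UniqueDiffOn ℝ I := uniqueDiffOn_Icc hbb
  set A : ℝ → ℝ → ℂ := fun x t => K x t - K x (-t)
  have hA : ContDiffOn ℝ 2 (uncurry A) (I ×ˢ I) := hK2.sub (hK2.comp_neg_snd (by simp [I]))
  have hAdiag : ∀ x ∈ I, A x x = 1 / 2 * ∫ s in (0:ℝ)..x, q s := fun x hx => by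
    simp only [A, hdiag x hx, hantidiag x hx]
    ring
  have hS' : ∀ x ∈ I, HasDerivWithinAt (sineSolution A ω) (sineSolutionDeriv I A ω x) I x :=
    fun x hx => hasDerivWithinAt_sineSolution hbb h0 hx (hA.of_le one_le_two) hω
  have hS'' : ∀ x ∈ I, HasDerivWithinAt (sineSolutionDeriv I A ω)
      (q x * sineSolution A ω x - ω ^ 2 * sineSolution A ω x) I x := fun x hx =>
    hasDerivWithinAt_sineSolutionDeriv hbb h0 hx hA hq.continuousOn
      (fun x hx t ht => pde_sub_comp_neg_snd (by simp [I]) hI hI hK2 hpde hx ht)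
      (fun x _ => by simp [A]) hAdiag hω
  have hS : ContinuousOn (sineSolution A ω) I := fun x hx => (hS' x hx).continuousWithinAt
  refine ⟨contDiffOn_two_of_hasDerivWithinAt hI hS' hS''
    ((hq.continuousOn.mul hS).sub (continuousOn_const.mul hS)), fun x hx => ?_, by simp, ?_⟩
  · have hode : derivWithin (derivWithin (sineSolution A ω) I) I x
        - q x * sineSolution A ω x + ω ^ 2 * sineSolution A ω x = 0 := by
      rw [derivWithin_derivWithin_of_hasDerivWithinAt hI hS' hS'' hx]
      ring
    exact hode
  · have hinit : derivWithin (sineSolution A ω) I 0 = 1 := by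
      rw [(hS' 0 h0).derivWithin (hI 0 h0)]
      simp [sineSolutionDeriv]
    exact hinit
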